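/- arXiv:1909.01775 — 3 statements merged into one kernel-verified Lean document; each statement's English description precedes it below -/
import Mathlib

section
/- For the double star S_{a,b} with 2 ≤ a ≤ b, γ_oidR(S_{a,b}) = 6, and γ_oidR(S_{1,b}) = 5 for b ≥ 1. -/
open SimpleGraph Finset

/-- Outer independent double Roman dominating function. -/
def IsOIDRDF {V : Type*} (G : SimpleGraph V) (f : V → ℕ) : Prop :=
  (∀ v, f v ≤ 3) ∧
  (∀ v, f v = 0 → (∃ u, G.Adj v u ∧ f u = 3) ∨
    (∃ u w, u ≠ w ∧ G.Adj v u ∧ G.Adj v w ∧ f u = 2 ∧ f w = 2)) ∧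
  (∀ v, f v = 1 → ∃ u, G.Adj v u ∧ 2 ≤ f u) ∧
  (∀ u v, G.Adj u v → f u = 0 → f v ≠ 0)

/-- Outer independent double Roman domination number. -/
noncomputable def oidRNum {V : Type*} (G : SimpleGraph V) [Fintype V] : ℕ :=
  sInf {w | ∃ f : V → ℕ, IsOIDRDF G f ∧ w = ∑ v, f v}

/-- Outer independent Roman dominating function. -/
def IsOIRDF {V : Type*} (G : SimpleGraph V) (f : V → ℕ) : Prop :=
  (∀ v, f v ≤ 2) ∧
  (∀ v, f v = 0 → ∃ u, G.Adj v u ∧ f u = 2) ∧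
  (∀ u v, G.Adj u v → f u = 0 → f v ≠ 0)

/-- Outer independent Roman domination number. -/
noncomputable def oiRNum {V : Type*} (G : SimpleGraph V) [Fintype V] : ℕ :=
  sInf {w | ∃ f : V → ℕ, IsOIRDF G f ∧ w = ∑ v, f v}

/-- Vertex cover number. -/
noncomputable def coverNum {V : Type*} (G : SimpleGraph V) [Fintype V] : ℕ :=
  sInf {k | ∃ S : Finset V, S.card = k ∧ ∀ u v, G.Adj u v → u ∈ S ∨ v ∈ S}

/-- Domination number. -/
noncomputable def domNum {V : Type*} (G : SimpleGraph V) [Fintype V] : ℕ :=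
  sInf {k | ∃ S : Finset V, S.card = k ∧ ∀ v, v ∉ S → ∃ u ∈ S, G.Adj v u}

/-- Independence number. -/
noncomputable def indNum {V : Type*} (G : SimpleGraph V) [Fintype V] : ℕ :=
  sSup {k | ∃ S : Finset V, S.card = k ∧ ∀ u ∈ S, ∀ v ∈ S, ¬ G.Adj u v}

/-- Maximum degree. -/
noncomputable def maxDeg {V : Type*} (G : SimpleGraph V) [Fintype V] : ℕ :=
  sSup (Set.range fun v => Nat.card {u | G.Adj v u})

/-- Underlying relation for the corona product. -/
def coronaRel {V W : Type*} (G : SimpleGraph V) (H : SimpleGraph W) :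
    (V ⊕ V × W) → (V ⊕ V × W) → Prop
  | Sum.inl u, Sum.inl v => G.Adj u v
  | Sum.inl u, Sum.inr p => u = p.1
  | Sum.inr p, Sum.inl u => u = p.1
  | Sum.inr p, Sum.inr q => p.1 = q.1 ∧ H.Adj p.2 q.2

/-- The corona product `G ⊙ H`. -/
def corona {V W : Type*} (G : SimpleGraph V) (H : SimpleGraph W) :
    SimpleGraph (V ⊕ V × W) :=
  SimpleGraph.fromRel (coronaRel G H)

/-- Underlying relation of the double star `S_{a,b}`: two adjacent centers, the first
adjacent to `a` leaves and the second to `b` leaves. -/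
def doubleStarRel (a b : ℕ) : (Fin 2 ⊕ (Fin a ⊕ Fin b)) → (Fin 2 ⊕ (Fin a ⊕ Fin b)) → Prop
  | Sum.inl i, Sum.inl j => i ≠ j
  | Sum.inl i, Sum.inr (Sum.inl _) => i = 0
  | Sum.inl i, Sum.inr (Sum.inr _) => i = 1
  | _, _ => False

/-- The double star `S_{a,b}`. -/
def doubleStar (a b : ℕ) : SimpleGraph (Fin 2 ⊕ (Fin a ⊕ Fin b)) :=
  SimpleGraph.fromRel (doubleStarRel a b)

variable {a b : ℕ}

lemma adj_c0_c1 : (doubleStar a b).Adj (Sum.inl 0) (Sum.inl 1) := by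
  simp [doubleStar, doubleStarRel]

lemma adj_c0_leafA (i : Fin a) : (doubleStar a b).Adj (Sum.inl 0) (Sum.inr (Sum.inl i)) := by
  simp [doubleStar, doubleStarRel]

lemma adj_c1_leafB (j : Fin b) : (doubleStar a b).Adj (Sum.inl 1) (Sum.inr (Sum.inr j)) := by
  simp [doubleStar, doubleStarRel]

lemma adj_leafA {i : Fin a} {u} (h : (doubleStar a b).Adj (Sum.inr (Sum.inl i)) u) :
    u = Sum.inl 0 := by
  rcases h with ⟨ne, h | h⟩ <;> rcases u with (j | (k | k)) <;>
    simp_all [doubleStarRel]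

lemma adj_leafB {j : Fin b} {u} (h : (doubleStar a b).Adj (Sum.inr (Sum.inr j)) u) :
    u = Sum.inl 1 := by
  rcases h with ⟨ne, h | h⟩ <;> rcases u with (j | (k | k)) <;>
    simp_all [doubleStarRel]

lemma adj_c1' {u} (h : (doubleStar a b).Adj (Sum.inl 1) u) :
    u = Sum.inl 0 ∨ ∃ j, u = Sum.inr (Sum.inr j) := by
  rcases h with ⟨ne, h | h⟩ <;> rcases u with (j | (k | k)) <;>
    simp_all [doubleStarRel] <;> omega

lemma sum_split (f : (Fin 2 ⊕ (Fin a ⊕ Fin b)) → ℕ) :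
    ∑ v, f v = f (Sum.inl 0) + f (Sum.inl 1) +
      (∑ i : Fin a, f (Sum.inr (Sum.inl i)) + ∑ j : Fin b, f (Sum.inr (Sum.inr j))) := by
  rw [Fintype.sum_sum_type, Fintype.sum_sum_type, Fin.sum_univ_two]

-- arithmetic side lemma
lemma side_bound {n : ℕ} (x : ℕ) (g : Fin n → ℕ) (hn : 2 ≤ n)
    (h0 : ∀ i, g i = 0 → x = 3) (h1 : ∀ i, g i = 1 → 2 ≤ x) :
    3 ≤ x + ∑ i, g i := by
  by_cases hz : ∃ i, g i = 0
  · obtain ⟨i, hi⟩ := hz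
    have := h0 i hi
    omega
  · push_neg at hz
    by_cases ho : ∃ i, g i = 1
    · obtain ⟨i, hi⟩ := ho
      have hx := h1 i hi
      have : (n : ℕ) ≤ ∑ i, g i := by
        calc (n : ℕ) = ∑ _i : Fin n, 1 := by simp
        _ ≤ ∑ i, g i := Finset.sum_le_sum fun i _ => by have := hz i; omega
      omega
    · push_neg at ho
      have : 2 * n ≤ ∑ i, g i := by
        calc 2 * n = ∑ _i : Fin n, 2 := by simp [mul_comm]
        _ ≤ ∑ i, g i := Finset.sum_le_sum fun i _ => by have := hz i; have := ho i; omega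
      omega


lemma leafA_facts {f} (hf : IsOIDRDF (doubleStar a b) f) (i : Fin a) :
    (f (Sum.inr (Sum.inl i)) = 0 → f (Sum.inl 0) = 3) ∧
    (f (Sum.inr (Sum.inl i)) = 1 → 2 ≤ f (Sum.inl 0)) := by
  obtain ⟨h3, h0, h1, hind⟩ := hf
  constructor
  · intro hz
    rcases h0 _ hz with ⟨u, hu, hu3⟩ | ⟨u, w, huw, hu, hw, _, _⟩
    · rwa [adj_leafA hu] at hu3
    · exact absurd ((adj_leafA hu).trans (adj_leafA hw).symm) huw
  · intro ho
    obtain ⟨u, hu, hu2⟩ := h1 _ ho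
    rwa [adj_leafA hu] at hu2

lemma leafB_facts {f} (hf : IsOIDRDF (doubleStar a b) f) (j : Fin b) :
    (f (Sum.inr (Sum.inr j)) = 0 → f (Sum.inl 1) = 3) ∧
    (f (Sum.inr (Sum.inr j)) = 1 → 2 ≤ f (Sum.inl 1)) := by
  obtain ⟨h3, h0, h1, hind⟩ := hf
  constructor
  · intro hz
    rcases h0 _ hz with ⟨u, hu, hu3⟩ | ⟨u, w, huw, hu, hw, _, _⟩
    · rwa [adj_leafB hu] at hu3
    · exact absurd ((adj_leafB hu).trans (adj_leafB hw).symm) huw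
  · intro ho
    obtain ⟨u, hu, hu2⟩ := h1 _ ho
    rwa [adj_leafB hu] at hu2

lemma lb2 (ha : 2 ≤ a) (hb : 2 ≤ b) {f} (hf : IsOIDRDF (doubleStar a b) f) :
    6 ≤ ∑ v, f v := by
  have hA := side_bound (f (Sum.inl 0)) (fun i => f (Sum.inr (Sum.inl i))) ha
    (fun i => (leafA_facts hf i).1) (fun i => (leafA_facts hf i).2)
  have hB := side_bound (f (Sum.inl 1)) (fun j => f (Sum.inr (Sum.inr j))) hb
    (fun j => (leafB_facts hf j).1) (fun j => (leafB_facts hf j).2)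
  beta_reduce at hA hB
  rw [sum_split]
  omega

lemma lb1 (hb : 1 ≤ b) {f} (hf : IsOIDRDF (doubleStar 1 b) f) : 5 ≤ ∑ v, f v := by
  obtain ⟨h3, h0, h1, hind⟩ := hf
  set x := f (Sum.inl 0) with hxdef
  set y := f (Sum.inl 1) with hydef
  set l := f (Sum.inr (Sum.inl 0)) with hldef
  set g : Fin b → ℕ := fun j => f (Sum.inr (Sum.inr j)) with hgdef
  have hsum : ∑ v, f v = x + y + (l + ∑ j, g j) := by
    rw [sum_split, Fin.sum_univ_one]
  have hB0 : ∀ j, g j = 0 → y = 3 := fun j => (leafB_facts ⟨h3, h0, h1, hind⟩ j).1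
  have hB1 : ∀ j, g j = 1 → 2 ≤ y := fun j => (leafB_facts ⟨h3, h0, h1, hind⟩ j).2
  have hA0 : l = 0 → x = 3 := (leafA_facts ⟨h3, h0, h1, hind⟩ 0).1
  have hA1 : l = 1 → 2 ≤ x := (leafA_facts ⟨h3, h0, h1, hind⟩ 0).2
  have hxl : 2 ≤ x + l ∧ (l ≤ 1 → 3 ≤ x + l) := by
    by_cases e0 : l = 0
    · have := hA0 e0; omega
    by_cases e1 : l = 1
    · have := hA1 e1; omega
    constructor <;> omega
  rw [hsum]
  by_cases hz : ∃ j, g j = 0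
  · obtain ⟨j, hj⟩ := hz
    have := hB0 j hj
    omega
  push_neg at hz
  by_cases ho : ∃ j, g j = 1
  · obtain ⟨j, hj⟩ := ho
    have hy := hB1 j hj
    have hBb : b ≤ ∑ j, g j := by
      calc (b:ℕ) = ∑ _j : Fin b, 1 := by simp
      _ ≤ ∑ j, g j := Finset.sum_le_sum fun j _ => by have := hz j; omega
    omega
  push_neg at ho
  have hall : ∀ j, 2 ≤ g j := fun j => by have := hz j; have := ho j; omega
  have hB2 : 2 * b ≤ ∑ j, g j := by
    calc 2 * b = ∑ _j : Fin b, 2 := by simp [mul_comm]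
    _ ≤ ∑ j, g j := Finset.sum_le_sum fun j _ => hall j
  by_cases hy : y = 0
  · have hx0 : x ≠ 0 := hind (Sum.inl 1) (Sum.inl 0) adj_c0_c1.symm hy
    rcases h0 (Sum.inl 1) hy with ⟨u, hu, hu3⟩ | ⟨u, w, huw, hu, hw, hu2, hw2⟩
    · rcases adj_c1' hu with rfl | ⟨j, rfl⟩
      · omega
      · have : g j ≤ ∑ j, g j :=
          Finset.single_le_sum (fun j _ => Nat.zero_le _) (Finset.mem_univ j)
        omega
    · rcases adj_c1' hu with rfl | ⟨j, rfl⟩ <;> rcases adj_c1' hw with rfl | ⟨j', rfl⟩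
      · exact absurd rfl huw
      · -- x = 2, so l ≠ 0 hence l ≥ 1
        have hl1 : l ≠ 0 := fun e => by have := hA0 e; omega
        omega
      · have hl1 : l ≠ 0 := fun e => by have := hA0 e; omega
        omega
      · have hjj' : j ≠ j' := fun e => huw (by rw [e])
        have hpair : g j + g j' ≤ ∑ j, g j := by
          have h1 : ({j, j'} : Finset (Fin b)).sum g ≤ ∑ j, g j :=
            Finset.sum_le_sum_of_subset (Finset.subset_univ _)
          rwa [Finset.sum_pair hjj'] at h1
        omega
  · omega

lemma adj_c0' {u} (h : (doubleStar a b).Adj (Sum.inl 0) u) :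
    u = Sum.inl 1 ∨ ∃ i, u = Sum.inr (Sum.inl i) := by
  rcases h with ⟨ne, h | h⟩ <;> rcases u with (j | (k | k)) <;>
    simp_all [doubleStarRel] <;> omega

lemma ub2 : IsOIDRDF (doubleStar a b) (Sum.elim (fun _ => 3) (fun _ => 0)) ∧
    (6 : ℕ) = ∑ v : Fin 2 ⊕ (Fin a ⊕ Fin b), Sum.elim (fun _ => 3) (fun _ => 0) v := by
  refine ⟨⟨fun v => by rcases v with _ | _ <;> simp, ?_, ?_, ?_⟩, ?_⟩
  · rintro (i | (i | j)) hv
    · simp at hv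
    · exact Or.inl ⟨Sum.inl 0, (adj_c0_leafA i).symm, rfl⟩
    · exact Or.inl ⟨Sum.inl 1, (adj_c1_leafB j).symm, rfl⟩
  · rintro (i | (i | j)) hv <;> simp at hv
  · rintro (i | (i | j)) v hadj hv
    · simp at hv
    · rw [adj_leafA hadj]; simp
    · rw [adj_leafB hadj]; simp
  · rw [sum_split]; simp

def f5 (b : ℕ) : Fin 2 ⊕ (Fin 1 ⊕ Fin b) → ℕ :=
  Sum.elim (fun i => if i = 0 then 0 else 3) (Sum.elim (fun _ => 2) (fun _ => 0))

lemma ub1 : IsOIDRDF (doubleStar 1 b) (f5 b) ∧ (5 : ℕ) = ∑ v, f5 b v := by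
  refine ⟨⟨fun v => by rcases v with i | (_ | _) <;> simp [f5] <;> split <;> omega,
    ?_, ?_, ?_⟩, ?_⟩
  · rintro (i | (i | j)) hv
    · simp [f5] at hv
      exact Or.inl ⟨Sum.inl 1, by rw [hv]; exact adj_c0_c1, rfl⟩
    · simp [f5] at hv
    · exact Or.inl ⟨Sum.inl 1, (adj_c1_leafB j).symm, rfl⟩
  · rintro (i | (i | j)) hv
    · simp only [f5, Sum.elim_inl] at hv
      split at hv <;> omega
    · simp [f5] at hv
    · simp [f5] at hv
  · rintro (i | (i | j)) v hadj hv
    · simp [f5] at hv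
      subst hv
      rcases adj_c0' hadj with rfl | ⟨k, rfl⟩ <;> simp [f5]
    · simp [f5] at hv
    · rw [adj_leafB hadj]; simp [f5]
  · rw [sum_split]; simp [f5]


theorem stmt15 :
    (∀ a b : ℕ, 2 ≤ a → a ≤ b → oidRNum (doubleStar a b) = 6) ∧
    (∀ b : ℕ, 1 ≤ b → oidRNum (doubleStar 1 b) = 5) := by
  constructor
  · intro a b ha hab
    refine le_antisymm (Nat.sInf_le ⟨_, ub2.1, ub2.2⟩) ?_
    refine le_csInf ⟨6, _, ub2.1, ub2.2⟩ ?_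
    rintro w ⟨f, hf, rfl⟩
    exact lb2 ha (ha.trans hab) hf
  · intro b hb
    refine le_antisymm (Nat.sInf_le ⟨_, ub1.1, ub1.2⟩) ?_
    refine le_csInf ⟨5, _, ub1.1, ub1.2⟩ ?_
    rintro w ⟨f, hf, rfl⟩
    exact lb1 hb hf
end

section
/- Let G' be a graph with at least one vertex and r ≥ 2 an integer. Then γ_oidR(G' ⊙ \overline{K_r}) = 3·|V(G')| = 3·β(G' ⊙ \overline{K_r}), where G' ⊙ \overline{K_r} is the corona of G' with the empty graph on r vertices. -/
open SimpleGraph Finset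

/-!
Each vertex `v` of `G` forms, with its `r ≥ 2` pendant leaves in the corona, a block of weight
at least 3: a leaf has `v` as its only neighbour, so it cannot get 0 unless `f v = 3`, and if
`f v ≤ 1` every leaf needs value at least 2. Putting 3 on the vertices of `G` and 0 on the leaves
attains `3 |V|`. The vertices of `G` also form a minimum vertex cover, because the edges joining
each `v` to one of its leaves are pairwise disjoint.
-/

section Corona

variable {V W : Type*} {G : SimpleGraph V} {H : SimpleGraph W}

@[simp]
lemma corona_adj_inl_inr {v : V} {p : V × W} :
    (corona G H).Adj (.inl v) (.inr p) ↔ v = p.1 := by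
  simp [corona, coronaRel]

@[simp]
lemma corona_adj_inr_inl {p : V × W} {v : V} :
    (corona G H).Adj (.inr p) (.inl v) ↔ v = p.1 :=
  (corona G H).adj_comm _ _ |>.trans corona_adj_inl_inr

lemma corona_bot_adj_inr {p : V × W} {u : V ⊕ V × W} :
    (corona G (⊥ : SimpleGraph W)).Adj (.inr p) u ↔ u = .inl p.1 := by
  cases u <;> simp [corona, coronaRel, eq_comm]

end Corona

section OIDRDF

variable {α : Type*} {G : SimpleGraph α} {f : α → ℕ}

lemma IsOIDRDF.ne_zero_of_unique_adj (hf : IsOIDRDF G f) {u v : α}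
    (hu : ∀ w, G.Adj u w → w = v) (hv : f v ≠ 3) : f u ≠ 0 := by
  intro h0
  rcases hf.2.1 u h0 with ⟨w, hw, hw3⟩ | ⟨w, x, hwx, hw, hx, -, -⟩
  · exact hv (hu w hw ▸ hw3)
  · exact hwx ((hu w hw).trans (hu x hx).symm)

lemma IsOIDRDF.two_le_of_unique_adj (hf : IsOIDRDF G f) {u v : α}
    (hu : ∀ w, G.Adj u w → w = v) (hv : f v ≤ 1) : 2 ≤ f u := by
  have hu0 := hf.ne_zero_of_unique_adj hu (by omega)
  by_contra! hlt
  obtain ⟨w, hw, hw2⟩ := hf.2.2.1 u (by omega)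
  rw [hu w hw] at hw2
  omega

lemma IsOIDRDF.three_le_add_sum_of_pendants (hf : IsOIDRDF G f) {v : α} {L : Finset α}
    (hL : 2 ≤ #L) (hpend : ∀ u ∈ L, ∀ w, G.Adj u w → w = v) :
    3 ≤ f v + ∑ u ∈ L, f u := by
  by_cases hv3 : f v = 3
  · omega
  rcases le_or_gt (f v) 1 with hv1 | hv2
  · have : #L • 2 ≤ ∑ u ∈ L, f u :=
      card_nsmul_le_sum L f 2 fun u hu => hf.two_le_of_unique_adj (hpend u hu) hv1
    rw [smul_eq_mul] at this
    omega
  · have : #L • 1 ≤ ∑ u ∈ L, f u :=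
      card_nsmul_le_sum L f 1 fun u hu =>
        Nat.one_le_iff_ne_zero.mpr (hf.ne_zero_of_unique_adj (hpend u hu) hv3)
    rw [smul_eq_mul] at this
    omega

lemma isOIDRDF_three_indicator [DecidableEq α] {S : Finset α}
    (hcover : ∀ u v, G.Adj u v → u ∈ S ∨ v ∈ S) (hdom : ∀ v ∉ S, ∃ u ∈ S, G.Adj v u) :
    IsOIDRDF G fun v => if v ∈ S then 3 else 0 := by
  refine ⟨fun v => by dsimp only; split_ifs <;> omega, fun v hv => .inl ?_, fun v hv => ?_, ?_⟩
  · obtain ⟨u, huS, hvu⟩ := hdom v (by simpa using hv)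
    exact ⟨u, hvu, by simp [huS]⟩
  · dsimp only at hv
    split_ifs at hv; omega
  · intro u v huv hu
    have huS : u ∉ S := by simpa using hu
    simp [(hcover u v huv).resolve_left huS]

end OIDRDF

lemma card_le_card_of_vertex_cover {α ι : Type*} [Fintype ι] {G : SimpleGraph α}
    {S : Finset α} (hS : ∀ u v, G.Adj u v → u ∈ S ∨ v ∈ S) {a b : ι → α}
    (hab : ∀ i, G.Adj (a i) (b i)) (ha : a.Injective) (hb : b.Injective)
    (hne : ∀ i j, a i ≠ b j) : Fintype.card ι ≤ #S := by
  classical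
  let g : ι → α := fun i => if a i ∈ S then a i else b i
  have hg : ∀ i, g i ∈ S := fun i => by
    by_cases h : a i ∈ S
    · simp [g, h]
    · simpa [g, h] using (hS _ _ (hab i)).resolve_left h
  have hinj : g.Injective := fun i j hij => by
    by_cases hi : a i ∈ S <;> by_cases hj : a j ∈ S <;>
      simp only [g, hi, hj, if_true, if_false] at hij
    exacts [ha hij, (hne i j hij).elim, (hne j i hij.symm).elim, hb hij]
  rw [← card_univ]
  exact card_le_card_of_injOn g (fun i _ => hg i) hinj.injOn

section CoronaBot

variable {V W : Type*} [Fintype V] [Fintype W] (G : SimpleGraph V)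

lemma three_mul_card_le_sum_of_isOIDRDF_corona_bot (hW : 2 ≤ Fintype.card W)
    {f : V ⊕ V × W → ℕ} (hf : IsOIDRDF (corona G (⊥ : SimpleGraph W)) f) :
    3 * Fintype.card V ≤ ∑ x, f x := by
  have hblock (v : V) : 3 ≤ f (.inl v) + ∑ j, f (.inr (v, j)) := by
    have := hf.three_le_add_sum_of_pendants (v := .inl v)
      (L := univ.map ⟨fun j => .inr (v, j), fun i j h => by simpa using h⟩) (by simpa using hW)
      fun u hu w hw => by
        obtain ⟨j, -, rfl⟩ := mem_map.mp hu
        exact corona_bot_adj_inr.mp hw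
    rwa [sum_map] at this
  calc 3 * Fintype.card V = ∑ _v : V, 3 := by simp [mul_comm]
    _ ≤ ∑ v, (f (.inl v) + ∑ j, f (.inr (v, j))) := sum_le_sum fun v _ => hblock v
    _ = ∑ x, f x := by
      rw [Fintype.sum_sum_type, Fintype.sum_prod_type, sum_add_distrib]

lemma oidRNum_corona_bot (hW : 2 ≤ Fintype.card W) :
    oidRNum (corona G (⊥ : SimpleGraph W)) = 3 * Fintype.card V := by
  classical
  let S : Finset (V ⊕ V × W) := univ.map .inl
  have hS : IsOIDRDF (corona G ⊥) fun x => if x ∈ S then 3 else 0 := by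
    refine isOIDRDF_three_indicator (fun u v huv => ?_) fun v hv => ?_
    · rcases u with u | p
      · simp [S]
      · simp [S, corona_bot_adj_inr.mp huv]
    · rcases v with v | p
      · simp [S] at hv
      · exact ⟨.inl p.1, by simp [S]⟩
  have hweight : ∑ x, (if x ∈ S then 3 else 0) = 3 * Fintype.card V := by
    simp [S, mul_comm]
  refine le_antisymm (Nat.sInf_le ⟨_, hS, hweight.symm⟩) (le_csInf ⟨_, _, hS, hweight.symm⟩ ?_)
  rintro w ⟨f, hf, rfl⟩
  exact three_mul_card_le_sum_of_isOIDRDF_corona_bot G hW hf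

lemma coverNum_corona_bot [Nonempty W] :
    coverNum (corona G (⊥ : SimpleGraph W)) = Fintype.card V := by
  classical
  have hmem : Fintype.card V ∈ {k | ∃ S : Finset (V ⊕ V × W), #S = k ∧
      ∀ u v, (corona G ⊥).Adj u v → u ∈ S ∨ v ∈ S} := by
    refine ⟨univ.map .inl, by simp, fun u v huv => ?_⟩
    rcases u with u | p
    · simp
    · simp [corona_bot_adj_inr.mp huv]
  refine le_antisymm (Nat.sInf_le hmem) (le_csInf ⟨_, hmem⟩ ?_)
  rintro k ⟨S, rfl, hS⟩
  obtain ⟨j⟩ := ‹Nonempty W›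
  exact card_le_card_of_vertex_cover hS (a := .inl) (b := fun v => .inr (v, j))
    (by simp) Sum.inl_injective (fun v w h => by simpa using h) (by simp)

end CoronaBot

theorem stmt16_general {V : Type*} [Fintype V] (G : SimpleGraph V)
    (r : ℕ) (hr : 2 ≤ r) :
    oidRNum (corona G (⊥ : SimpleGraph (Fin r))) = 3 * Fintype.card V ∧
    oidRNum (corona G (⊥ : SimpleGraph (Fin r))) =
      3 * coverNum (corona G (⊥ : SimpleGraph (Fin r))) := by
  have : Nonempty (Fin r) := ⟨⟨0, by omega⟩⟩
  have hoidR := oidRNum_corona_bot (W := Fin r) G (by simpa using hr)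
  exact ⟨hoidR, by rw [hoidR, coverNum_corona_bot]⟩

theorem stmt16 {V : Type*} [Fintype V] [Nonempty V] (G : SimpleGraph V)
    (r : ℕ) (hr : 2 ≤ r) :
    oidRNum (corona G (⊥ : SimpleGraph (Fin r))) = 3 * Fintype.card V ∧
    oidRNum (corona G (⊥ : SimpleGraph (Fin r))) =
      3 * coverNum (corona G (⊥ : SimpleGraph (Fin r))) :=
  stmt16_general G r hr
end

section
/- Let G be a planar graph of maximum degree at most 3 on vertex set {v_1,...,v_n}, and let G' be obtained from G by adding, for each i, a path on three vertices with center u_i and joining v_i to u_i. Then γ_oidR(G') = 4n − α(G). -/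
open SimpleGraph Finset

/-- Relation attaching to each vertex `v` of `G` a path `x–u–y` on three new vertices with
center `u = (v,0)` joined to `v`. -/
def attachRel {n : ℕ} (G : SimpleGraph (Fin n)) :
    (Fin n ⊕ Fin n × Fin 3) → (Fin n ⊕ Fin n × Fin 3) → Prop
  | Sum.inl u, Sum.inl v => G.Adj u v
  | Sum.inl u, Sum.inr p => u = p.1 ∧ p.2 = 0
  | Sum.inr p, Sum.inl u => u = p.1 ∧ p.2 = 0
  | Sum.inr p, Sum.inr q => p.1 = q.1 ∧ p.2 = 0 ∧ q.2 ≠ 0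

section Aux
variable {n : ℕ} {G : SimpleGraph (Fin n)}

lemma adj_inl_inl {i j : Fin n} :
    (SimpleGraph.fromRel (attachRel G)).Adj (Sum.inl i) (Sum.inl j) ↔ G.Adj i j := by
  simp only [SimpleGraph.fromRel_adj, attachRel]
  constructor
  · rintro ⟨h, h1 | h1⟩
    · exact h1
    · exact h1.symm
  · intro h
    exact ⟨by simp [G.ne_of_adj h], Or.inl h⟩

lemma adj_inl_inr {i : Fin n} {p : Fin n × Fin 3} :
    (SimpleGraph.fromRel (attachRel G)).Adj (Sum.inl i) (Sum.inr p) ↔ p.1 = i ∧ p.2 = 0 := by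
  simp only [SimpleGraph.fromRel_adj, attachRel]
  constructor
  · rintro ⟨h, ⟨h1, h2⟩ | ⟨h1, h2⟩⟩ <;> exact ⟨h1.symm, h2⟩
  · rintro ⟨h1, h2⟩
    exact ⟨by simp, Or.inl ⟨h1.symm, h2⟩⟩

lemma adj_inr_inr {p q : Fin n × Fin 3} :
    (SimpleGraph.fromRel (attachRel G)).Adj (Sum.inr p) (Sum.inr q) ↔
      p.1 = q.1 ∧ ((p.2 = 0 ∧ q.2 ≠ 0) ∨ (q.2 = 0 ∧ p.2 ≠ 0)) := by
  simp only [SimpleGraph.fromRel_adj, attachRel]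
  constructor
  · rintro ⟨h, ⟨h1, h2, h3⟩ | ⟨h1, h2, h3⟩⟩
    · exact ⟨h1, Or.inl ⟨h2, h3⟩⟩
    · exact ⟨h1.symm, Or.inr ⟨h2, h3⟩⟩
  · rintro ⟨h1, ⟨h2, h3⟩ | ⟨h2, h3⟩⟩
    · refine ⟨?_, Or.inl ⟨h1, h2, h3⟩⟩
      intro h; obtain rfl := Sum.inr.inj h; exact h3 h2
    · refine ⟨?_, Or.inr ⟨h1.symm, h2, h3⟩⟩
      intro h; obtain rfl := Sum.inr.inj h; exact h3 h2

lemma adj_leaf {i : Fin n} {j : Fin 3} (hj : j ≠ 0) {u : Fin n ⊕ Fin n × Fin 3}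
    (h : (SimpleGraph.fromRel (attachRel G)).Adj (Sum.inr (i, j)) u) : u = Sum.inr (i, 0) := by
  cases u with
  | inl k =>
    have := h.symm
    rw [adj_inl_inr] at this
    exact absurd this.2 hj
  | inr p =>
    rw [adj_inr_inr] at h
    obtain ⟨h1, ⟨h2, h3⟩ | ⟨h2, h3⟩⟩ := h
    · exact absurd h2 hj
    · obtain ⟨a, b⟩ := p
      simp_all

end Aux
section Main
variable {n : ℕ} {G : SimpleGraph (Fin n)}

lemma block_bound {f : Fin n ⊕ Fin n × Fin 3 → ℕ}
    (hf : IsOIDRDF (SimpleGraph.fromRel (attachRel G)) f) (i : Fin n) :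
    3 ≤ f (Sum.inl i) + f (Sum.inr (i, 0)) + f (Sum.inr (i, 1)) + f (Sum.inr (i, 2)) ∧
      (f (Sum.inl i) + f (Sum.inr (i, 0)) + f (Sum.inr (i, 1)) + f (Sum.inr (i, 2)) = 3 →
        f (Sum.inl i) = 0) := by
  obtain ⟨hle, h0, h1, hind⟩ := hf
  set a := f (Sum.inl i)
  set b := f (Sum.inr (i, 0))
  set c := f (Sum.inr (i, 1))
  set d := f (Sum.inr (i, 2))
  have leaf0 : ∀ j : Fin 3, j ≠ 0 → f (Sum.inr (i, j)) = 0 → b = 3 := by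
    intro j hj hfj
    rcases h0 _ hfj with ⟨u, hadj, hu⟩ | ⟨u, w, huw, hau, haw, _, _⟩
    · rw [adj_leaf hj hadj] at hu; exact hu
    · rw [adj_leaf hj hau, adj_leaf hj haw] at huw; exact absurd rfl huw
  have leaf1 : ∀ j : Fin 3, j ≠ 0 → f (Sum.inr (i, j)) = 1 → 2 ≤ b := by
    intro j hj hfj
    obtain ⟨u, hadj, hu⟩ := h1 _ hfj
    rwa [adj_leaf hj hadj] at hu
  by_cases hb3 : b = 3
  · constructor <;> omega
  · have hc : c ≠ 0 := fun h => hb3 (leaf0 1 (by decide) h)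
    have hd : d ≠ 0 := fun h => hb3 (leaf0 2 (by decide) h)
    by_cases hb2 : 2 ≤ b
    · constructor <;> omega
    · have hc2 : 2 ≤ c := by
        by_cases h : c = 1
        · exact absurd (leaf1 1 (by decide) h) hb2
        · omega
      have hd2 : 2 ≤ d := by
        by_cases h : d = 1
        · exact absurd (leaf1 2 (by decide) h) hb2
        · omega
      by_cases hb0 : b = 0
      · have ha : a ≠ 0 := by
          intro ha
          exact hind _ _ (adj_inl_inr.mpr ⟨rfl, rfl⟩).symm hb0 ha
        constructor <;> omega
      · constructor <;> omega

lemma indNum_le (hn : ∀ k ∈ {k | ∃ S : Finset (Fin n), S.card = k ∧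
    ∀ u ∈ S, ∀ v ∈ S, ¬ G.Adj u v}, k ≤ n) : indNum G ≤ n := by
  have hne : {k | ∃ S : Finset (Fin n), S.card = k ∧
      ∀ u ∈ S, ∀ v ∈ S, ¬ G.Adj u v}.Nonempty := ⟨0, ∅, by simp⟩
  exact csSup_le hne hn

lemma ind_set_card_le {S : Finset (Fin n)} (h : ∀ u ∈ S, ∀ v ∈ S, ¬ G.Adj u v) :
    S.card ≤ indNum G := by
  have hbdd : BddAbove {k | ∃ S : Finset (Fin n), S.card = k ∧
      ∀ u ∈ S, ∀ v ∈ S, ¬ G.Adj u v} := by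
    refine ⟨n, ?_⟩
    rintro k ⟨T, rfl, -⟩
    simpa using T.card_le_univ
  exact le_csSup hbdd ⟨S, rfl, h⟩

end Main

theorem stmt17 (n : ℕ) (G : SimpleGraph (Fin n)) :
    oidRNum (SimpleGraph.fromRel (attachRel G)) = 4 * n - indNum G := by
  have hαn : indNum G ≤ n := indNum_le (by rintro k ⟨T, rfl, -⟩; simpa using T.card_le_univ)
  -- a maximum independent set
  have hmem : indNum G ∈ {k | ∃ S : Finset (Fin n), S.card = k ∧
      ∀ u ∈ S, ∀ v ∈ S, ¬ G.Adj u v} := by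
    have hne : {k | ∃ S : Finset (Fin n), S.card = k ∧
        ∀ u ∈ S, ∀ v ∈ S, ¬ G.Adj u v}.Nonempty := ⟨0, ∅, by simp⟩
    have hbdd : BddAbove {k | ∃ S : Finset (Fin n), S.card = k ∧
        ∀ u ∈ S, ∀ v ∈ S, ¬ G.Adj u v} := by
      refine ⟨n, ?_⟩
      rintro k ⟨T, rfl, -⟩
      simpa using T.card_le_univ
    exact Nat.sSup_mem hne hbdd
  obtain ⟨S, hScard, hSind⟩ := hmem
  -- the witnessing function
  set f0 : Fin n ⊕ Fin n × Fin 3 → ℕ :=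
    Sum.elim (fun i => if i ∈ S then 0 else 1) (fun p => if p.2 = 0 then 3 else 0) with hf0
  have hf0adj : ∀ i : Fin n, (SimpleGraph.fromRel (attachRel G)).Adj (Sum.inl i)
      (Sum.inr (i, 0)) := fun i => adj_inl_inr.mpr ⟨rfl, rfl⟩
  have hadj2 : ∀ (i : Fin n) (j : Fin 3), j ≠ 0 →
      (SimpleGraph.fromRel (attachRel G)).Adj (Sum.inr (i, j)) (Sum.inr (i, 0)) :=
    fun i j hj => adj_inr_inr.mpr ⟨rfl, Or.inr ⟨rfl, hj⟩⟩
  have hOIDRDF : IsOIDRDF (SimpleGraph.fromRel (attachRel G)) f0 := by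
    refine ⟨?_, ?_, ?_, ?_⟩
    · rintro (i | p) <;> simp only [hf0, Sum.elim_inl, Sum.elim_inr] <;> split <;> omega
    · rintro (i | p) hv
      · exact Or.inl ⟨Sum.inr (i, 0), hf0adj i, by simp [hf0]⟩
      · have hp2 : p.2 ≠ 0 := by
          intro h; simp [hf0, h] at hv
        refine Or.inl ⟨Sum.inr (p.1, 0), ?_, by simp [hf0]⟩
        have := hadj2 p.1 p.2 hp2
        rwa [show ((p.1 : Fin n), p.2) = p from rfl] at this
    · rintro (i | p) hv
      · exact ⟨Sum.inr (i, 0), hf0adj i, by simp [hf0]⟩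
      · exfalso; simp only [hf0, Sum.elim_inr] at hv
        split at hv <;> omega
    · rintro (i | p) (j | q) hadj hu hv
      · rw [adj_inl_inl] at hadj
        simp only [hf0, Sum.elim_inl] at hu hv
        have hi : i ∈ S := by by_contra h; simp [h] at hu
        have hj : j ∈ S := by by_contra h; simp [h] at hv
        exact hSind i hi j hj hadj
      · rw [adj_inl_inr] at hadj
        simp [hf0, hadj.2] at hv
      · have := hadj.symm; rw [adj_inl_inr] at this
        simp [hf0, this.2] at hu
      · rw [adj_inr_inr] at hadj
        obtain ⟨-, ⟨h2, -⟩ | ⟨h2, -⟩⟩ := hadj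
        · simp [hf0, h2] at hu
        · simp [hf0, h2] at hv
  have hsum : ∑ v, f0 v = 3 * n + (n - S.card) := by
    rw [Fintype.sum_sum_type]
    have h1 : ∑ p : Fin n × Fin 3, f0 (Sum.inr p) = 3 * n := by
      rw [Fintype.sum_prod_type]
      simp [hf0, Fin.sum_univ_three, mul_comm]
    have h2 : ∑ i : Fin n, f0 (Sum.inl i) = n - S.card := by
      have key : ∑ i : Fin n, f0 (Sum.inl i) + ∑ i : Fin n, (if i ∈ S then 1 else 0) = n := by
        rw [← Finset.sum_add_distrib]
        simp only [hf0, Sum.elim_inl]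
        rw [Finset.sum_congr rfl (fun i _ => by split <;> rfl)]
        simp
      have hcard : ∑ i : Fin n, (if i ∈ S then 1 else 0) = S.card := by
        simp [Finset.sum_ite_mem]
      omega
    omega
  apply le_antisymm
  · have hmem2 : (4 * n - indNum G) ∈ {w | ∃ f : Fin n ⊕ Fin n × Fin 3 → ℕ,
        IsOIDRDF (SimpleGraph.fromRel (attachRel G)) f ∧ w = ∑ v, f v} :=
      ⟨f0, hOIDRDF, by rw [hsum]; omega⟩
    exact Nat.sInf_le hmem2
  · have hne2 : {w | ∃ f : Fin n ⊕ Fin n × Fin 3 → ℕ,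
        IsOIDRDF (SimpleGraph.fromRel (attachRel G)) f ∧ w = ∑ v, f v}.Nonempty :=
      ⟨_, f0, hOIDRDF, rfl⟩
    apply le_csInf hne2
    rintro w ⟨f, hf, rfl⟩
    -- lower bound
    set T : Finset (Fin n) := Finset.univ.filter (fun i =>
      f (Sum.inl i) + f (Sum.inr (i, 0)) + f (Sum.inr (i, 1)) + f (Sum.inr (i, 2)) = 3) with hT
    have hTind : ∀ u ∈ T, ∀ v ∈ T, ¬ G.Adj u v := by
      intro u hu v hv hadj
      rw [hT, Finset.mem_filter] at hu hv
      have h0u := (block_bound hf u).2 hu.2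
      have h0v := (block_bound hf v).2 hv.2
      exact hf.2.2.2 _ _ (adj_inl_inl.mpr hadj) h0u h0v
    have hTcard : T.card ≤ indNum G := ind_set_card_le hTind
    have hsum' : ∑ v, f v = ∑ i : Fin n,
        (f (Sum.inl i) + f (Sum.inr (i, 0)) + f (Sum.inr (i, 1)) + f (Sum.inr (i, 2))) := by
      rw [Fintype.sum_sum_type, Fintype.sum_prod_type]
      rw [← Finset.sum_add_distrib]
      apply Finset.sum_congr rfl
      intro i _
      rw [Fin.sum_univ_three]
      ring
    have hkey : 4 * n ≤ ∑ v, f v + T.card := by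
      rw [hsum']
      have : ∑ i : Fin n, (4:ℕ) ≤ ∑ i : Fin n,
          ((f (Sum.inl i) + f (Sum.inr (i, 0)) + f (Sum.inr (i, 1)) + f (Sum.inr (i, 2)))
            + (if i ∈ T then 1 else 0)) := by
        apply Finset.sum_le_sum
        intro i _
        have hb := block_bound hf i
        by_cases h : i ∈ T
        · rw [hT, Finset.mem_filter] at h
          simp [hT, h.2]
        · have : f (Sum.inl i) + f (Sum.inr (i, 0)) + f (Sum.inr (i, 1)) + f (Sum.inr (i, 2)) ≠ 3 := by
            intro hh
            exact h (by rw [hT]; simp [hh])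
          simp only [if_neg h]
          omega
      rw [Finset.sum_add_distrib] at this
      have hTc : ∑ i : Fin n, (if i ∈ T then 1 else 0) = T.card := by
        simp [Finset.sum_ite_mem]
      simp only [Finset.sum_const, Finset.card_univ, Fintype.card_fin, smul_eq_mul] at this
      omega
    omega
end
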